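/- arXiv:math/0207017 — 3 statements merged into one kernel-verified Lean document; each statement's English description precedes it below -/
import Mathlib

section
/- Let Λ be a Poisson tensor homogeneous of degree -1 with respect to Δ (i.e. [Δ,Λ]=-Λ), and let Γ be a vector field homogeneous of degree k with respect to Δ (i.e. [Δ,Γ]=kΓ) satisfying [Γ,Λ]=0. Then J = (Λ + Γ∧Δ, Γ) is a Jacobi structure. -/
/-- Abstract model of the graded commutative algebra `A(E)` of multivector fields /
multisections of a Lie algebroid, equipped with the wedge product and the
Schouten–Nijenhuis bracket (sign convention: graded Lie bracket for the degree
shifted by one).  `H p X` means `X` is homogeneous of (multivector) degree `p`. -/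
structure SchoutenAlgebra (V : Type*) [AddCommGroup V] [Module ℝ V] where
  wedge : V →ₗ[ℝ] V →ₗ[ℝ] V
  bracket : V →ₗ[ℝ] V →ₗ[ℝ] V
  H : ℤ → V → Prop
  one : V
  h_one : H 0 one
  wedge_one : ∀ X : V, wedge one X = X
  wedge_assoc : ∀ X Y Z : V, wedge (wedge X Y) Z = wedge X (wedge Y Z)
  wedge_comm : ∀ {p q : ℤ} {X Y : V}, H p X → H q Y →
    wedge X Y = (Int.negOnePow (p * q) : ℤ) • wedge Y X
  wedge_mem : ∀ {p q : ℤ} {X Y : V}, H p X → H q Y → H (p + q) (wedge X Y)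
  bracket_mem : ∀ {p q : ℤ} {X Y : V}, H p X → H q Y → H (p + q - 1) (bracket X Y)
  bracket_antisymm : ∀ {p q : ℤ} {X Y : V}, H p X → H q Y →
    bracket X Y = -((Int.negOnePow ((p - 1) * (q - 1)) : ℤ) • bracket Y X)
  bracket_jacobi : ∀ {p q : ℤ} {X Y : V}, H p X → H q Y → ∀ Z : V,
    bracket (bracket X Y) Z =
      bracket X (bracket Y Z) -
        (Int.negOnePow ((p - 1) * (q - 1)) : ℤ) • bracket Y (bracket X Z)
  bracket_leibniz : ∀ {p q : ℤ} {X Y : V}, H p X → H q Y → ∀ Z : V,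
    bracket X (wedge Y Z) =
      wedge (bracket X Y) Z + (Int.negOnePow ((p - 1) * q) : ℤ) • wedge Y (bracket X Z)

/-!
Write `W = Γ ∧ Δ`. Since `Γ` and `Δ` are vector fields with `[Δ, Γ] = k Γ`, the bivector `W`
satisfies `[Γ, W] = 0` and `[W, W] = 0`: every term of the Leibniz expansion vanishes by
`[Γ, Γ] = 0` or `Γ ∧ Γ = 0`. Homogeneity of `Λ` gives `[Λ, Δ] = Λ`, so the Leibniz rule yields
`[Λ, W] = [W, Λ] = -Γ ∧ Λ`. Expanding `[Λ + W, Λ + W]` bilinearly then leaves exactly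
`-2 Γ ∧ Λ = -2 Γ ∧ (Λ + W)`.
-/

namespace SchoutenAlgebra

variable {V : Type*} [AddCommGroup V] [Module ℝ V] (S : SchoutenAlgebra V)

section Signs

variable {p q : ℤ} {X Y : V}

theorem wedge_comm_of_odd (hp : Odd p) (hq : Odd q) (hX : S.H p X) (hY : S.H q Y) :
    S.wedge X Y = -S.wedge Y X := by
  rw [S.wedge_comm hX hY, Int.negOnePow_odd _ (hp.mul hq), Units.val_neg, Units.val_one,
    neg_one_zsmul]

theorem wedge_self_eq_zero_of_odd (hp : Odd p) (hX : S.H p X) : S.wedge X X = 0 :=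
  have : IsAddTorsionFree V := .of_isTorsionFree ℝ V
  self_eq_neg.mp (S.wedge_comm_of_odd hp hp hX hX)

theorem bracket_anticomm_of_odd_right (hq : Odd q) (hX : S.H p X) (hY : S.H q Y) :
    S.bracket X Y = -S.bracket Y X := by
  have hq' : Even (q - 1) := hq.sub_odd odd_one
  rw [S.bracket_antisymm hX hY, Int.negOnePow_even _ (hq'.mul_left _), Units.val_one, one_zsmul]

theorem bracket_self_eq_zero_of_odd (hp : Odd p) (hX : S.H p X) : S.bracket X X = 0 :=
  have : IsAddTorsionFree V := .of_isTorsionFree ℝ V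
  self_eq_neg.mp (S.bracket_anticomm_of_odd_right hp hX hX)

theorem bracket_comm_of_even (hp : Even p) (hq : Even q) (hX : S.H p X) (hY : S.H q Y) :
    S.bracket X Y = S.bracket Y X := by
  have hodd : Odd ((p - 1) * (q - 1)) := (hp.sub_odd odd_one).mul (hq.sub_odd odd_one)
  rw [S.bracket_antisymm hX hY, Int.negOnePow_odd _ hodd, Units.val_neg, Units.val_one,
    neg_one_zsmul, neg_neg]

theorem bracket_wedge_of_odd (hp : Odd p) (hX : S.H p X) (hY : S.H q Y) (Z : V) :
    S.bracket X (S.wedge Y Z) = S.wedge (S.bracket X Y) Z + S.wedge Y (S.bracket X Z) := by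
  have hp' : Even (p - 1) := hp.sub_odd odd_one
  rw [S.bracket_leibniz hX hY, Int.negOnePow_even _ (hp'.mul_right _), Units.val_one, one_zsmul]

theorem bracket_wedge_of_even_of_odd (hp : Even p) (hq : Odd q) (hX : S.H p X) (hY : S.H q Y)
    (Z : V) :
    S.bracket X (S.wedge Y Z) = S.wedge (S.bracket X Y) Z - S.wedge Y (S.bracket X Z) := by
  rw [S.bracket_leibniz hX hY, Int.negOnePow_odd _ ((hp.sub_odd odd_one).mul hq), Units.val_neg,
    Units.val_one, neg_one_zsmul, sub_eq_add_neg]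

end Signs

section OddFactors

variable {p q : ℤ} {X Y : V}

theorem wedge_self_wedge_eq_zero (hp : Odd p) (hX : S.H p X) (Y : V) :
    S.wedge X (S.wedge X Y) = 0 := by
  rw [← S.wedge_assoc, S.wedge_self_eq_zero_of_odd hp hX, map_zero, LinearMap.zero_apply]

theorem bracket_wedge_self_eq_zero (hp : Odd p) (hq : Odd q) (hX : S.H p X) (hY : S.H q Y)
    (c : ℤ) (hYX : S.bracket Y X = c • X) : S.bracket X (S.wedge X Y) = 0 := by
  rw [S.bracket_wedge_of_odd hp hX hX, S.bracket_self_eq_zero_of_odd hp hX,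
    S.bracket_anticomm_of_odd_right hq hX hY, hYX, map_zero, LinearMap.zero_apply, map_neg,
    map_zsmul, S.wedge_self_eq_zero_of_odd hp hX, smul_zero, neg_zero, zero_add]

theorem bracket_wedge_wedge_self_eq_zero (hp : Odd p) (hq : Odd q) (hX : S.H p X)
    (hY : S.H q Y) (c : ℤ) (hYX : S.bracket Y X = c • X) :
    S.bracket (S.wedge X Y) (S.wedge X Y) = 0 := by
  have hW : S.H (p + q) (S.wedge X Y) := S.wedge_mem hX hY
  have hWX : S.bracket (S.wedge X Y) X = 0 := by
    rw [S.bracket_anticomm_of_odd_right hp hW hX,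
      S.bracket_wedge_self_eq_zero hp hq hX hY c hYX, neg_zero]
  have hWY : S.bracket (S.wedge X Y) Y = -(c • S.wedge X Y) := by
    rw [S.bracket_anticomm_of_odd_right hq hW hY, S.bracket_wedge_of_odd hq hY hX,
      hYX, S.bracket_self_eq_zero_of_odd hq hY, map_zero, add_zero, map_zsmul,
      LinearMap.smul_apply]
  rw [S.bracket_wedge_of_even_of_odd (hp.add_odd hq) hp hW hX, hWX, hWY, map_zero,
    LinearMap.zero_apply, map_neg, map_zsmul, S.wedge_self_wedge_eq_zero hp hX, smul_zero,
    neg_zero, sub_zero]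

end OddFactors

end SchoutenAlgebra

/-- If `Λ` is a Poisson tensor homogeneous of degree `-1` w.r.t. `Δ`
(`[[Δ,Λ]] = -Λ`) and `Γ` is a vector field homogeneous of degree `k`
(`[[Δ,Γ]] = kΓ`) with `[[Γ,Λ]] = 0`, then `J = (Λ + Γ∧Δ, Γ)` is a Jacobi
structure: `[[Γ, Λ+Γ∧Δ]] = 0` and `[[Λ+Γ∧Δ, Λ+Γ∧Δ]] = -2 Γ∧(Λ+Γ∧Δ)`. -/
theorem jacobi_pair_of_homogeneous {V : Type*} [AddCommGroup V] [Module ℝ V]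
    (S : SchoutenAlgebra V) (Λ Γ Δ : V) (k : ℤ)
    (hΛ : S.H 2 Λ) (hΓ : S.H 1 Γ) (hΔ : S.H 1 Δ)
    (hPoisson : S.bracket Λ Λ = 0)
    (hHom : S.bracket Δ Λ = -Λ)
    (hΓhom : S.bracket Δ Γ = k • Γ)
    (hΓΛ : S.bracket Γ Λ = 0) :
    S.bracket Γ (Λ + S.wedge Γ Δ) = 0 ∧
      S.bracket (Λ + S.wedge Γ Δ) (Λ + S.wedge Γ Δ) =
        -((2 : ℤ) • S.wedge Γ (Λ + S.wedge Γ Δ)) := by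
  have hΓW : S.bracket Γ (S.wedge Γ Δ) = 0 :=
    S.bracket_wedge_self_eq_zero odd_one odd_one hΓ hΔ k hΓhom
  have hWW : S.bracket (S.wedge Γ Δ) (S.wedge Γ Δ) = 0 :=
    S.bracket_wedge_wedge_self_eq_zero odd_one odd_one hΓ hΔ k hΓhom
  have hΛW : S.bracket Λ (S.wedge Γ Δ) = -S.wedge Γ Λ := by
    rw [S.bracket_wedge_of_even_of_odd even_two odd_one hΛ hΓ,
      S.bracket_anticomm_of_odd_right odd_one hΛ hΓ, hΓΛ,
      S.bracket_anticomm_of_odd_right odd_one hΛ hΔ, hHom, neg_zero, neg_neg, map_zero,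
      LinearMap.zero_apply, zero_sub]
  have hWΛ : S.bracket (S.wedge Γ Δ) Λ = -S.wedge Γ Λ := by
    rw [S.bracket_comm_of_even (odd_one.add_odd odd_one) even_two (S.wedge_mem hΓ hΔ) hΛ, hΛW]
  refine ⟨by rw [map_add, hΓΛ, hΓW, add_zero], ?_⟩
  simp only [map_add, LinearMap.add_apply, hPoisson, hΛW, hWΛ, hWW,
    S.wedge_self_wedge_eq_zero odd_one hΓ, two_smul]
  abel
end

section
/- Let (A(E), [[·,·]]) be the Schouten bracket of a Lie algebroid E and Φ a 1-cocycle (dΦ=0). Define the Schouten–Jacobi bracket [[X,Y]]^Φ = [[X,Y]] + x X∧i_Φ Y - (-1)^x y i_Φ X ∧ Y, where x=|X|-1, y=|Y|-1. Then [[·,·]]^Φ satisfies the generalized Leibniz rule: [[X, Y∧Z]]^Φ = [[X,Y]]^Φ∧Z + (-1)^{x(y+1)} Y∧[[X,Z]]^Φ - [[X,1]]^Φ∧Y∧Z. -/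
/-- The Schouten–Jacobi bracket `[[X,Y]]^Φ = [[X,Y]] + x X∧i_Φ Y - (-1)^x y i_Φ X∧Y`
associated with a Lie algebroid and a 1-cocycle `Φ` (contraction `iφ`), for `X`
of multivector degree `p` (shifted degree `x = p-1`) and `Y` of degree `q`. -/
def brPhi {V : Type*} [AddCommGroup V] [Module ℝ V] (S : SchoutenAlgebra V)
    (iφ : V →ₗ[ℝ] V) (p q : ℤ) (X Y : V) : V :=
  S.bracket X Y + (p - 1) • S.wedge X (iφ Y)
    - ((Int.negOnePow (p - 1) : ℤ) * (q - 1)) • S.wedge (iφ X) Y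


/-!
Expand both sides with the Leibniz rule of the Schouten bracket and the derivation rule of
`i_Φ`.  The terms `[[X,·]]` and `X ∧ i_Φ(·)` match after moving `Y` past `X` (sign `(-1)^{pq}`);
the terms `i_Φ X ∧ Y ∧ Z` carry the coefficients `q - 1` and `r - 1` from the two brackets on the
right but `q + r - 1` on the left, and the missing one is supplied by
`[[X,1]]^Φ = (-1)^{p-1} i_Φ X`, since `i_Φ 1 = 0` and `[[X,1]] = 0`.
-/

namespace SchoutenAlgebra

variable {V : Type*} [AddCommGroup V] [Module ℝ V] (S : SchoutenAlgebra V)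

theorem wedge_one_right {p : ℤ} {X : V} (hX : S.H p X) : S.wedge X S.one = X := by
  rw [S.wedge_comm hX S.h_one, mul_zero, Int.negOnePow_zero, Units.val_one, one_smul,
    S.wedge_one]

theorem wedge_left_comm {p q : ℤ} {X Y : V} (hX : S.H p X) (hY : S.H q Y) (W : V) :
    S.wedge X (S.wedge Y W) = ((p * q).negOnePow : ℤ) • S.wedge Y (S.wedge X W) := by
  rw [← S.wedge_assoc, S.wedge_comm hX hY, map_zsmul, LinearMap.smul_apply, S.wedge_assoc]

theorem map_one_eq_zero_of_derivation (iφ : V →ₗ[ℝ] V)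
    (hiφ_mem : ∀ {p : ℤ} {X : V}, S.H p X → S.H (p - 1) (iφ X))
    (hiφ_der : ∀ {p : ℤ} {X : V}, S.H p X → ∀ Y : V,
      iφ (S.wedge X Y) = S.wedge (iφ X) Y + (Int.negOnePow p : ℤ) • S.wedge X (iφ Y)) :
    iφ S.one = 0 := by
  have h := hiφ_der S.h_one S.one
  rw [S.wedge_one, S.wedge_one, S.wedge_one_right (hiφ_mem S.h_one), Int.negOnePow_zero,
    Units.val_one, one_smul] at h
  simpa using h

theorem brPhi_one (iφ : V →ₗ[ℝ] V)
    (hiφ_mem : ∀ {p : ℤ} {X : V}, S.H p X → S.H (p - 1) (iφ X))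
    (hiφ_one : iφ S.one = 0) (hbr_one : ∀ X : V, S.bracket X S.one = 0)
    {p : ℤ} {X : V} (hX : S.H p X) :
    brPhi S iφ p 0 X S.one = ((p - 1).negOnePow : ℤ) • iφ X := by
  simp [brPhi, hbr_one, hiφ_one, S.wedge_one_right (hiφ_mem hX)]

end SchoutenAlgebra

theorem Int.negOnePow_sub_one_mul_mul_negOnePow_mul (p q : ℤ) :
    ((p - 1) * q).negOnePow * (p * q).negOnePow = q.negOnePow := by
  rw [← Int.negOnePow_add, Int.negOnePow_eq_iff]
  exact ⟨p * q - q, by ring⟩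

theorem schouten_jacobi_generalized_leibniz_general {V : Type*} [AddCommGroup V] [Module ℝ V]
    (S : SchoutenAlgebra V) (iφ : V →ₗ[ℝ] V)
    (hiφ_mem : ∀ {p : ℤ} {X : V}, S.H p X → S.H (p - 1) (iφ X))
    (hiφ_der : ∀ {p : ℤ} {X : V}, S.H p X → ∀ Y : V,
      iφ (S.wedge X Y) = S.wedge (iφ X) Y + (Int.negOnePow p : ℤ) • S.wedge X (iφ Y))
    (hbr_one : ∀ X : V, S.bracket X S.one = 0)
    {p q r : ℤ} (X Y Z : V) (hX : S.H p X) (hY : S.H q Y) :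
    brPhi S iφ p (q + r) X (S.wedge Y Z) =
      S.wedge (brPhi S iφ p q X Y) Z
        + (Int.negOnePow ((p - 1) * q) : ℤ) • S.wedge Y (brPhi S iφ p r X Z)
        - S.wedge (brPhi S iφ p 0 X S.one) (S.wedge Y Z) := by
  have hiφ_one := S.map_one_eq_zero_of_derivation iφ hiφ_mem hiφ_der
  rw [S.brPhi_one iφ hiφ_mem hiφ_one hbr_one hX]
  simp only [brPhi, S.bracket_leibniz hX hY Z, hiφ_der hY Z, map_add, map_sub, map_zsmul,
    LinearMap.add_apply, LinearMap.sub_apply, LinearMap.smul_apply, S.wedge_assoc,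
    S.wedge_left_comm hY hX, S.wedge_left_comm hY (hiφ_mem hX)]
  have hsign : (((p - 1) * q).negOnePow : ℤ) * (q * p).negOnePow = q.negOnePow := by
    rw [mul_comm q p, ← Units.val_mul, Int.negOnePow_sub_one_mul_mul_negOnePow_mul]
  have hsquare : (((p - 1) * q).negOnePow : ℤ) * (q * (p - 1)).negOnePow = 1 := by
    rw [mul_comm q, ← Units.val_mul, Int.units_mul_self, Units.val_one]
  match_scalars
  · ring
  · ring
  · ring
  · linear_combination (1 - p) * hsign
  · linear_combination ((p - 1).negOnePow * (r - 1) : ℤ) * hsquare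

/-- The Schouten–Jacobi bracket `[[·,·]]^Φ` of a Lie algebroid `E`
with 1-cocycle `Φ` satisfies the generalized Leibniz rule
`[[X, Y∧Z]]^Φ = [[X,Y]]^Φ∧Z + (-1)^{x(y+1)} Y∧[[X,Z]]^Φ - [[X,1]]^Φ∧Y∧Z`. -/
theorem schouten_jacobi_generalized_leibniz {V : Type*} [AddCommGroup V] [Module ℝ V]
    (S : SchoutenAlgebra V) (iφ : V →ₗ[ℝ] V)
    (hiφ_mem : ∀ {p : ℤ} {X : V}, S.H p X → S.H (p - 1) (iφ X))
    (hiφ_der : ∀ {p : ℤ} {X : V}, S.H p X → ∀ Y : V,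
      iφ (S.wedge X Y) = S.wedge (iφ X) Y + (Int.negOnePow p : ℤ) • S.wedge X (iφ Y))
    (hiφ2 : ∀ X : V, iφ (iφ X) = 0)
    (hbr_one : ∀ X : V, S.bracket X S.one = 0)
    {p q r : ℤ} (X Y Z : V) (hX : S.H p X) (hY : S.H q Y) (hZ : S.H r Z) :
    brPhi S iφ p (q + r) X (S.wedge Y Z) =
      S.wedge (brPhi S iφ p q X Y) Z
        + (Int.negOnePow ((p - 1) * q) : ℤ) • S.wedge Y (brPhi S iφ p r X Z)
        - S.wedge (brPhi S iφ p 0 X S.one) (S.wedge Y Z) :=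
  schouten_jacobi_generalized_leibniz_general S iφ hiφ_mem hiφ_der hbr_one X Y Z hX hY
end

section
/- With L^Φ_X = L_X + i_{X_Φ} the deformed Lie differential of a Lie algebroid E with 1-cocycle Φ, the graded commutators satisfy [[L^Φ_X, L^Φ_Y]] = -L^Φ_{[[Y,X]]} and [[L^Φ_X, i_Y]] = -i_{[[Y,X]]}, with the ordinary Schouten bracket [[Y,X]]. -/
/-- Abstract Cartan calculus of a Lie algebroid `E` with 1-cocycle `Φ`:
the graded module `Ω` of forms `Ω(E) = A(E*)` with grading `HΩ`, wedge product
`wedgeΩ`, number (degree) operator `N`, exterior derivative `d`, the operator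
`Φw : μ ↦ Φ∧μ`, contraction `i X` and Lie differential
`L X = [[i X, d]]` for multisections `X`, together with the contraction `iφ`
with the 1-cocycle `Φ` on multisections and the classical Cartan identities
`[[L_X,L_Y]] = -L_{[[Y,X]]}`, `[[L_X,i_Y]] = -i_{[[Y,X]]}`, `[[i_X,i_Y]] = 0`. -/
structure CartanCalculus {V : Type*} [AddCommGroup V] [Module ℝ V]
    (S : SchoutenAlgebra V) (Ω : Type*) [AddCommGroup Ω] [Module ℝ Ω] where
  HΩ : ℤ → Ω → Prop
  wedgeΩ : Ω →ₗ[ℝ] Ω →ₗ[ℝ] Ω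
  d : Module.End ℝ Ω
  Φw : Module.End ℝ Ω
  N : Module.End ℝ Ω
  i : V →ₗ[ℝ] Module.End ℝ Ω
  L : V → Module.End ℝ Ω
  iφ : V →ₗ[ℝ] V
  hiφ_mem : ∀ {p : ℤ} {X : V}, S.H p X → S.H (p - 1) (iφ X)
  hN : ∀ {m : ℤ} {μ : Ω}, HΩ m μ → N μ = (m : ℝ) • μ
  hwedgeΩ_mem : ∀ {m m' : ℤ} {μ ν : Ω}, HΩ m μ → HΩ m' ν → HΩ (m + m') (wedgeΩ μ ν)
  hd_mem : ∀ {m : ℤ} {μ : Ω}, HΩ m μ → HΩ (m + 1) (d μ)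
  hΦw_mem : ∀ {m : ℤ} {μ : Ω}, HΩ m μ → HΩ (m + 1) (Φw μ)
  hi_mem : ∀ {p : ℤ} {X : V}, S.H p X → ∀ {m : ℤ} {μ : Ω}, HΩ m μ → HΩ (m - p) (i X μ)
  hL_def : ∀ {p : ℤ} {X : V}, S.H p X → ∀ μ : Ω,
    L X μ = i X (d μ) + (Int.negOnePow (p - 1) : ℤ) • d (i X μ)
  hcontr : ∀ {p : ℤ} {X : V}, S.H p X → ∀ μ : Ω,
    i X (Φw μ) = i (iφ X) μ - (Int.negOnePow (p - 1) : ℤ) • Φw (i X μ)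
  hLL : ∀ {p q : ℤ} {X Y : V}, S.H p X → S.H q Y →
    L X * L Y - (Int.negOnePow ((p - 1) * (q - 1)) : ℤ) • (L Y * L X) =
      -L (S.bracket Y X)
  hLi : ∀ {p q : ℤ} {X Y : V}, S.H p X → S.H q Y →
    L X * i Y - (Int.negOnePow ((p - 1) * q) : ℤ) • (i Y * L X) =
      -i (S.bracket Y X)
  hii : ∀ {p q : ℤ} {X Y : V}, S.H p X → S.H q Y →
    i X * i Y = (Int.negOnePow (p * q) : ℤ) • (i Y * i X)

/-- The Jacobi–Lie differential
`£^{Φ,a}_X μ = L_X μ + (|μ|+a) i_{X_Φ} μ - (-1)^x x Φ∧ i_X μ`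
of a Jacobi algebroid `(E,Φ)`, for `X` of degree `p` (`x = p-1`). -/
def CartanCalculus.pounds {V : Type*} [AddCommGroup V] [Module ℝ V]
    {S : SchoutenAlgebra V} {Ω : Type*} [AddCommGroup Ω] [Module ℝ Ω]
    (C : CartanCalculus S Ω) (a : ℝ) (p : ℤ) (X : V) : Module.End ℝ Ω :=
  C.L X + C.i (C.iφ X) * (C.N + a • 1)
    - ((Int.negOnePow (p - 1) : ℤ) * (p - 1)) • (C.Φw * C.i X)

/-! Expanding both commutators bilinearly, `[[L_X, L_Y]]`, `[[L_X, i_Y]]` and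
`[[i_{X_Φ}, i_{Y_Φ}]] = 0` are the classical identities, while the cross terms
`[[L_X, i_{Y_Φ}]]` and `[[i_{X_Φ}, L_Y]]` combine into `-i_{[[Y,X]]_Φ}` because `Φ` is a
cocycle, i.e. contraction with `Φ` is a graded derivation of the Schouten bracket. -/

def gradedComm {R : Type*} [Ring R] (n : ℤ) (a b : R) : R :=
  a * b - (Int.negOnePow n : ℤ) • (b * a)

section gradedComm

variable {R : Type*} [Ring R] (n : ℤ) (a a' b b' : R)

theorem gradedComm_add_left : gradedComm n (a + a') b = gradedComm n a b + gradedComm n a' b := by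
  simp only [gradedComm, add_mul, mul_add, smul_add]
  abel

theorem gradedComm_add_right :
    gradedComm n a (b + b') = gradedComm n a b + gradedComm n a b' := by
  simp only [gradedComm, add_mul, mul_add, smul_add]
  abel

theorem gradedComm_swap : gradedComm n b a = -((Int.negOnePow n : ℤ) • gradedComm n a b) := by
  rw [gradedComm, gradedComm, smul_sub, smul_smul, ← Units.val_mul, Int.units_mul_self,
    Units.val_one, one_smul]
  abel

end gradedComm

namespace SchoutenAlgebra

variable {V : Type*} [AddCommGroup V] [Module ℝ V] (S : SchoutenAlgebra V)

def IsDerivation (D : V →ₗ[ℝ] V) : Prop :=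
  ∀ {p : ℤ} {X : V}, S.H p X → ∀ Y : V,
    D (S.bracket X Y) = S.bracket (D X) Y + (Int.negOnePow (p - 1) : ℤ) • S.bracket X (D Y)

theorem IsDerivation.apply_bracket_swap {S : SchoutenAlgebra V} {D : V →ₗ[ℝ] V}
    (hD : S.IsDerivation D) (hD_mem : ∀ {p : ℤ} {X : V}, S.H p X → S.H (p - 1) (D X))
    {p q : ℤ} {X Y : V} (hX : S.H p X) (hY : S.H q Y) :
    D (S.bracket Y X) =
      S.bracket (D Y) X - (Int.negOnePow ((p - 1) * (q - 1)) : ℤ) • S.bracket (D X) Y := by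
  have hsign : (Int.negOnePow (q - 1) : ℤ) * (Int.negOnePow ((q - 1) * (p - 1 - 1)) : ℤ) =
      (Int.negOnePow ((p - 1) * (q - 1)) : ℤ) := by
    rw [← Units.val_mul, ← Int.negOnePow_add,
      show q - 1 + (q - 1) * (p - 1 - 1) = (p - 1) * (q - 1) by ring]
  rw [hD hY X, S.bracket_antisymm hY (hD_mem hX), smul_neg, smul_smul, hsign, ← sub_eq_add_neg]

end SchoutenAlgebra

namespace CartanCalculus

variable {V : Type*} [AddCommGroup V] [Module ℝ V] {S : SchoutenAlgebra V}
  {Ω : Type*} [AddCommGroup Ω] [Module ℝ Ω] (C : CartanCalculus S Ω)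

def deformedL (X : V) : Module.End ℝ Ω :=
  C.L X + C.i (C.iφ X)

variable {C} {p q : ℤ} {X Y : V}

theorem gradedComm_L_L (hX : S.H p X) (hY : S.H q Y) :
    gradedComm ((p - 1) * (q - 1)) (C.L X) (C.L Y) = -C.L (S.bracket Y X) :=
  C.hLL hX hY

theorem gradedComm_L_i (hX : S.H p X) (hY : S.H q Y) :
    gradedComm ((p - 1) * q) (C.L X) (C.i Y) = -C.i (S.bracket Y X) :=
  C.hLi hX hY

theorem gradedComm_i_L (hX : S.H p X) (hY : S.H q Y) :
    gradedComm (p * (q - 1)) (C.i X) (C.L Y) =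
      (Int.negOnePow (p * (q - 1)) : ℤ) • C.i (S.bracket X Y) := by
  rw [gradedComm_swap, mul_comm, gradedComm_L_i hY hX, smul_neg, neg_neg]

theorem gradedComm_i_i (hX : S.H p X) (hY : S.H q Y) :
    gradedComm (p * q) (C.i X) (C.i Y) = 0 :=
  sub_eq_zero.mpr (C.hii hX hY)

theorem gradedComm_deformedL_deformedL (hcocycle : S.IsDerivation C.iφ)
    (hX : S.H p X) (hY : S.H q Y) :
    gradedComm ((p - 1) * (q - 1)) (C.deformedL X) (C.deformedL Y) =
      -C.deformedL (S.bracket Y X) := by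
  have hXΦ := C.hiφ_mem hX
  have hYΦ := C.hiφ_mem hY
  simp only [deformedL, gradedComm_add_left, gradedComm_add_right]
  rw [gradedComm_L_L hX hY, gradedComm_L_i hX hYΦ, gradedComm_i_L hXΦ hY,
    gradedComm_i_i hXΦ hYΦ, hcocycle.apply_bracket_swap C.hiφ_mem hX hY]
  simp only [map_sub, map_zsmul]
  abel

theorem gradedComm_deformedL_i (hX : S.H p X) (hY : S.H q Y) :
    gradedComm ((p - 1) * q) (C.deformedL X) (C.i Y) = -C.i (S.bracket Y X) := by
  rw [deformedL, gradedComm_add_left, gradedComm_L_i hX hY, gradedComm_i_i (C.hiφ_mem hX) hY,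
    add_zero]

end CartanCalculus

/-- For the deformed Lie differential `L^Φ_X = L_X + i_{X_Φ}` of a
Lie algebroid `E` with 1-cocycle `Φ`, the graded commutators satisfy
`[[L^Φ_X, L^Φ_Y]] = -L^Φ_{[[Y,X]]}` and `[[L^Φ_X, i_Y]] = -i_{[[Y,X]]}`,
with the ordinary Schouten bracket `[[Y,X]]`. -/
theorem deformed_lie_differential_commutators {V Ω : Type*}
    [AddCommGroup V] [Module ℝ V] [AddCommGroup Ω] [Module ℝ Ω]
    (S : SchoutenAlgebra V) (C : CartanCalculus S Ω)
    (hcocycle : ∀ {p : ℤ} {X : V}, S.H p X → ∀ Y : V,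
      C.iφ (S.bracket X Y) =
        S.bracket (C.iφ X) Y + (Int.negOnePow (p - 1) : ℤ) • S.bracket X (C.iφ Y))
    {p q : ℤ} (X Y : V) (hX : S.H p X) (hY : S.H q Y) :
    ((C.L X + C.i (C.iφ X)) * (C.L Y + C.i (C.iφ Y))
        - (Int.negOnePow ((p - 1) * (q - 1)) : ℤ) •
            ((C.L Y + C.i (C.iφ Y)) * (C.L X + C.i (C.iφ X))) =
      -(C.L (S.bracket Y X) + C.i (C.iφ (S.bracket Y X)))) ∧
    ((C.L X + C.i (C.iφ X)) * C.i Y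
        - (Int.negOnePow ((p - 1) * q) : ℤ) • (C.i Y * (C.L X + C.i (C.iφ X))) =
      -C.i (S.bracket Y X)) := by
  exact ⟨CartanCalculus.gradedComm_deformedL_deformedL hcocycle hX hY,
    CartanCalculus.gradedComm_deformedL_i hX hY⟩
end
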